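/- Let m ≥ 1 and let X, Y ⊆ ℤ_{≥0}^m. Then Vert(Vert(X) + Vert(Y)) = Vert(Vert(X) + Y) = Vert(X + Vert(Y)) = Vert(X + Y), where + denotes the Minkowski sum of subsets of ℤ_{≥0}^m. -/

import Mathlib

open Pointwise

noncomputable section

/-- The embedding of `ℤ_{≥0}^m` into `ℝ^m`. -/
def emb {m : ℕ} (x : Fin m → ℕ) : Fin m → ℝ := fun i => (x i : ℝ)

/-- The Newton polygon of `X ⊆ ℤ_{≥0}^m`: the convex hull (in `ℝ^m`) of
`X + ℤ_{≥0}^m`. -/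
def newton {m : ℕ} (X : Set (Fin m → ℕ)) : Set (Fin m → ℝ) :=
  convexHull ℝ (emb '' (X + (Set.univ : Set (Fin m → ℕ))))

/-- The vertex set of `X`: the elements `x ∈ X` with `x ∉ N(X \ {x})`. -/
def vert {m : ℕ} (X : Set (Fin m → ℕ)) : Set (Fin m → ℕ) :=
  {x ∈ X | emb x ∉ newton (X \ {x})}

/-!
A point `x ∈ X` is a vertex exactly when `emb x` is an extreme point of `N(X)`. One direction is
elementary; for the other, separate `emb x` from the closed convex set `N(X \ {x})` by a
functional that is nonnegative on the orthant: it is then minimised over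
`conv (N(X \ {x}) ∪ (emb x + ℝ_{≥0}^m)) ⊇ N(X)` only along the orthant at `emb x`, whose apex is
extreme. Dickson's lemma makes `N(X)` a polytope plus the orthant, hence closed, and a minimal
finite spanning subset of `X` consists of vertices, so `N(Vert X) = N(X)`. Together with
`N(X + Y) = N(X) + N(Y)` this shows that `Vert X + Y ⊆ X + Y` have the same Newton polygon, hence
the same extreme points, hence the same vertices.
-/

open Set

section Orthant

variable {ι : Type*} {N : Set (ι → ℝ)} {p : ι → ℝ}

theorem exists_nonneg_clm_lt_of_notMem (hNc : Convex ℝ N) (hNcl : IsClosed N)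
    (hN : ∀ q ∈ N, ∀ v, 0 ≤ v → q + v ∈ N) (hp : p ∉ N) :
    ∃ f : (ι → ℝ) →L[ℝ] ℝ, (∀ v, 0 ≤ v → 0 ≤ f v) ∧ ∀ q ∈ N, f p < f q := by
  rcases N.eq_empty_or_nonempty with rfl | ⟨q₀, hq₀⟩
  · exact ⟨0, fun _ _ => le_rfl, fun _ h => h.elim⟩
  obtain ⟨f, u, hpu, hNu⟩ := geometric_hahn_banach_point_closed hNc hNcl hp
  refine ⟨f, fun v hv => ?_, fun q hq => hpu.trans (hNu q hq)⟩
  by_contra! hfv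
  -- walking from `q₀` along `v` stays in `N` but brings `f` down to `u`
  set t := (f q₀ - u) / -f v
  have ht : 0 ≤ t := div_nonneg (sub_nonneg.2 (hNu q₀ hq₀).le) (neg_nonneg.2 hfv.le)
  have hft : f (q₀ + t • v) = u := by
    rw [map_add, map_smul, smul_eq_mul, div_mul_eq_mul_div, div_neg, mul_div_cancel_right₀ _ hfv.ne]
    ring
  exact (hNu _ (hN q₀ hq₀ _ (smul_nonneg ht hv))).ne' hft

theorem mem_extremePoints_convexHull_union_Ici (hNc : Convex ℝ N) (hNcl : IsClosed N)
    (hN : ∀ q ∈ N, ∀ v, 0 ≤ v → q + v ∈ N) (hp : p ∉ N) :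
    p ∈ (convexHull ℝ (N ∪ Ici p)).extremePoints ℝ := by
  obtain ⟨f, hf0, hfN⟩ := exists_nonneg_clm_lt_of_notMem hNc hNcl hN hp
  -- `f ≥ f p` on `T`, with equality only inside `Ici p`: so `T` is convex and `p` is extreme in it
  set T := {q | f p < f q} ∪ Ici p
  have hfT : ∀ q ∈ T, f p ≤ f q := by
    rintro q (hq | hq)
    · exact hq.le
    · simpa using hf0 _ (sub_nonneg.2 hq)
  have hsmul : ∀ q ∈ T, ∀ a : ℝ, 0 ≤ a → a * f q ≤ a * f p → a • p ≤ a • q := by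
    intro q hq a ha hle
    rcases ha.eq_or_lt with rfl | ha
    · simp
    rcases hq with hq | hq
    · exact absurd ((mul_le_mul_iff_right₀ ha).1 hle) hq.not_ge
    · exact smul_le_smul_of_nonneg_left hq ha.le
  have hcomb : ∀ x ∈ T, ∀ y ∈ T, ∀ a b : ℝ, 0 ≤ a → 0 ≤ b → a + b = 1 →
      f (a • x + b • y) ≤ f p → a • p ≤ a • x ∧ b • p ≤ b • y := by
    intro x hx y hy a b ha hb hab hle
    rw [map_add, map_smul, map_smul, smul_eq_mul, smul_eq_mul] at hle
    have hx' := mul_le_mul_of_nonneg_left (hfT x hx) ha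
    have hy' := mul_le_mul_of_nonneg_left (hfT y hy) hb
    have hp' : f p = a * f p + b * f p := by rw [← add_mul, hab, one_mul]
    exact ⟨hsmul x hx a ha (by linarith), hsmul y hy b hb (by linarith)⟩
  have hT : Convex ℝ T := by
    intro x hx y hy a b ha hb hab
    by_cases hlt : f p < f (a • x + b • y)
    · exact Or.inl hlt
    obtain ⟨hax, hby⟩ := hcomb x hx y hy a b ha hb hab (not_lt.1 hlt)
    exact Or.inr <| calc
      p = a • p + b • p := by rw [← add_smul, hab, one_smul]
      _ ≤ a • x + b • y := add_le_add hax hby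
  have hpT : p ∈ T.extremePoints ℝ := by
    refine ⟨Or.inr self_mem_Ici, ?_⟩
    rintro x hx y hy ⟨a, b, ha, hb, hab, hxy⟩
    obtain ⟨hax, hby⟩ := hcomb x hx y hy a b ha.le hb.le hab (by rw [hxy])
    have hsum : (a • x - a • p) + (b • y - b • p) = 0 := by
      rw [← add_sub_add_comm, hxy, ← add_smul, hab, one_smul, sub_self]
    have hx0 := ((add_eq_zero_iff_of_nonneg (sub_nonneg.2 hax) (sub_nonneg.2 hby)).1 hsum).1
    exact smul_right_injective _ ha.ne' (sub_eq_zero.1 hx0)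
  exact inter_extremePoints_subset_extremePoints_of_subset
    (convexHull_min (union_subset_union hfN subset_rfl) hT)
    ⟨subset_convexHull ℝ _ (Or.inr self_mem_Ici), hpT⟩

end Orthant

theorem convexHull_range_natCast : convexHull ℝ (range ((↑) : ℕ → ℝ)) = Ici 0 := by
  refine (convexHull_min (range_subset_iff.2 Nat.cast_nonneg) (convex_Ici 0)).antisymm
    fun t (ht : 0 ≤ t) => ?_
  have hseg : t ∈ segment ℝ ((⌊t⌋₊ : ℕ) : ℝ) ((⌊t⌋₊ + 1 : ℕ) : ℝ) := by
    rw [segment_eq_Icc (by simp)]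
    exact ⟨Nat.floor_le ht, by exact_mod_cast (Nat.lt_floor_add_one t).le⟩
  exact segment_subset_convexHull (mem_range_self _) (mem_range_self _) hseg

section NewtonPolygon

variable {m : ℕ}

theorem emb_injective : Function.Injective (emb (m := m)) :=
  fun _ _ h => funext fun i => Nat.cast_injective (congrFun h i)

theorem emb_add (x y : Fin m → ℕ) : emb (x + y) = emb x + emb y := by
  funext i
  simp [emb]

theorem emb_nonneg (x : Fin m → ℕ) : 0 ≤ emb x :=
  fun _ => Nat.cast_nonneg _

theorem image_emb_add (A B : Set (Fin m → ℕ)) : emb '' (A + B) = emb '' A + emb '' B :=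
  image_add ((Nat.castAddMonoidHom ℝ).compLeft (Fin m))

theorem convexHull_range_emb : convexHull ℝ (range (emb (m := m))) = Ici 0 := by
  have hrange : range (emb (m := m)) = univ.pi fun _ => range ((↑) : ℕ → ℝ) := by
    ext v
    simp only [mem_range, mem_univ_pi, emb, funext_iff, Classical.skolem]
  rw [hrange, convexHull_pi, convexHull_range_natCast, pi_univ_Ici]
  rfl

theorem newton_eq_convexHull_add_Ici (X : Set (Fin m → ℕ)) :
    newton X = convexHull ℝ (emb '' X) + Ici 0 := by
  rw [newton, image_emb_add, convexHull_add, image_univ, convexHull_range_emb]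

theorem convex_newton (X : Set (Fin m → ℕ)) : Convex ℝ (newton X) :=
  convex_convexHull ℝ _

theorem newton_mono {A B : Set (Fin m → ℕ)} (h : A ⊆ B) : newton A ⊆ newton B :=
  convexHull_mono (image_mono (add_subset_add_right h))

theorem newton_add (X Y : Set (Fin m → ℕ)) : newton (X + Y) = newton X + newton Y := by
  rw [newton, newton, newton, ← convexHull_add, ← image_emb_add, add_add_add_comm, univ_add_univ]

theorem add_mem_newton {X : Set (Fin m → ℕ)} {p v : Fin m → ℝ} (hp : p ∈ newton X)
    (hv : 0 ≤ v) : p + v ∈ newton X := by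
  rw [newton_eq_convexHull_add_Ici] at hp ⊢
  obtain ⟨a, ha, c, hc, rfl⟩ := hp
  exact ⟨a, ha, c + v, add_nonneg hc hv, (add_assoc a c v).symm⟩

theorem emb_mem_newton {X : Set (Fin m → ℕ)} {x : Fin m → ℕ} (hx : x ∈ X) :
    emb x ∈ newton X := by
  rw [newton_eq_convexHull_add_Ici]
  exact ⟨emb x, subset_convexHull ℝ _ (mem_image_of_mem emb hx), 0, self_mem_Ici, add_zero _⟩

theorem newton_subset_newton_iff {A B : Set (Fin m → ℕ)} :
    newton A ⊆ newton B ↔ emb '' A ⊆ newton B := by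
  refine ⟨fun h => image_subset_iff.2 fun a ha => h (emb_mem_newton ha), fun h => ?_⟩
  rw [newton_eq_convexHull_add_Ici A]
  rintro _ ⟨p, hp, v, hv, rfl⟩
  exact add_mem_newton (convexHull_min h (convex_newton B) hp) hv

theorem exists_finite_subset_newton_eq (X : Set (Fin m → ℕ)) :
    ∃ F ⊆ X, F.Finite ∧ newton F = newton X := by
  have hX : X.IsPWO := isPWO_of_wellQuasiOrderedLE X
  -- Dickson's lemma: `X` has finitely many minimal elements and lies above them
  refine ⟨{x | Minimal (· ∈ X) x}, setOfPred_minimal_subset X,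
    (setOfPred_minimal_antichain _).finite_of_partiallyWellOrderedOn
      (hX.mono (setOfPred_minimal_subset X)),
    (newton_mono (setOfPred_minimal_subset X)).antisymm (newton_subset_newton_iff.2 ?_)⟩
  rintro _ ⟨x, hx, rfl⟩
  obtain ⟨y, hyx, hy⟩ := hX.exists_le_minimal hx
  rw [← add_tsub_cancel_of_le hyx, emb_add]
  exact add_mem_newton (emb_mem_newton hy) (emb_nonneg _)

theorem isClosed_newton (X : Set (Fin m → ℕ)) : IsClosed (newton X) := by
  obtain ⟨F, -, hF, hFX⟩ := exists_finite_subset_newton_eq X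
  rw [← hFX, newton_eq_convexHull_add_Ici]
  exact isClosed_Ici.add_left_of_isCompact ((hF.image emb).isCompact_convexHull ℝ)

theorem newton_subset_convexHull_union_Ici (X : Set (Fin m → ℕ)) (x : Fin m → ℕ) :
    newton X ⊆ convexHull ℝ (newton (X \ {x}) ∪ Ici (emb x)) := by
  refine convexHull_min ?_ (convex_convexHull ℝ _)
  rintro _ ⟨_, ⟨y, hy, u, -, rfl⟩, rfl⟩
  refine subset_convexHull ℝ _ ?_
  rw [emb_add]
  rcases eq_or_ne y x with rfl | hyx
  · exact Or.inr (le_add_of_nonneg_right (emb_nonneg u))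
  · exact Or.inl (add_mem_newton (emb_mem_newton ⟨hy, hyx⟩) (emb_nonneg u))

theorem mem_of_emb_mem_extremePoints_newton {A : Set (Fin m → ℕ)} {x : Fin m → ℕ}
    (h : emb x ∈ (newton A).extremePoints ℝ) : x ∈ A := by
  obtain ⟨_, ⟨a, ha, u, -, rfl⟩, hau⟩ := extremePoints_convexHull_subset h
  have hseg : emb x ∈ openSegment ℝ (emb a) (emb a + (2 : ℝ) • emb u) :=
    ⟨1 / 2, 1 / 2, by norm_num, by norm_num, by norm_num, by rw [← hau, emb_add]; module⟩
  have hax : emb a = emb x := h.2 (emb_mem_newton ha)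
    (add_mem_newton (emb_mem_newton ha) (smul_nonneg zero_le_two (emb_nonneg u))) hseg
  exact emb_injective hax ▸ ha

theorem mem_vert_iff {X : Set (Fin m → ℕ)} {x : Fin m → ℕ} :
    x ∈ vert X ↔ x ∈ X ∧ emb x ∈ (newton X).extremePoints ℝ := by
  refine ⟨fun ⟨hx, hnot⟩ => ⟨hx, ?_⟩, fun ⟨hx, hext⟩ => ⟨hx, fun hmem => ?_⟩⟩
  · exact inter_extremePoints_subset_extremePoints_of_subset
      (newton_subset_convexHull_union_Ici X x)
      ⟨emb_mem_newton hx, mem_extremePoints_convexHull_union_Ici (convex_newton _)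
        (isClosed_newton _) (fun _ hq _ hv => add_mem_newton hq hv) hnot⟩
  · exact (mem_of_emb_mem_extremePoints_newton
      (inter_extremePoints_subset_extremePoints_of_subset (newton_mono sdiff_subset)
        ⟨hmem, hext⟩)).2 rfl

theorem newton_sdiff_singleton {A : Set (Fin m → ℕ)} {z : Fin m → ℕ}
    (h : emb z ∈ newton (A \ {z})) : newton (A \ {z}) = newton A := by
  refine (newton_mono sdiff_subset).antisymm (newton_subset_newton_iff.2 ?_)
  rintro _ ⟨y, hy, rfl⟩
  rcases eq_or_ne y z with rfl | hyz
  · exact h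
  · exact emb_mem_newton ⟨hy, hyz⟩

theorem vert_subset (X : Set (Fin m → ℕ)) : vert X ⊆ X :=
  fun _ hx => hx.1

theorem vert_eq_of_newton_eq {A B : Set (Fin m → ℕ)} (hAB : A ⊆ B) (h : newton A = newton B) :
    vert A = vert B := by
  ext x
  rw [mem_vert_iff, mem_vert_iff, h]
  exact ⟨fun ⟨hx, hext⟩ => ⟨hAB hx, hext⟩,
    fun ⟨_, hext⟩ => ⟨mem_of_emb_mem_extremePoints_newton (h ▸ hext), hext⟩⟩

theorem newton_vert (X : Set (Fin m → ℕ)) : newton (vert X) = newton X := by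
  obtain ⟨F₀, hF₀X, hF₀, hF₀N⟩ := exists_finite_subset_newton_eq X
  obtain ⟨F, ⟨hFF₀, hFN⟩, hFmin⟩ :=
    (hF₀.finite_subsets.subset fun F (hF : F ⊆ F₀ ∧ newton F = newton X) => hF.1).exists_minimal
      ⟨F₀, subset_rfl, hF₀N⟩
  have hFvert : F ⊆ vert X := by
    intro z hz
    rw [mem_vert_iff, ← hFN]
    refine ⟨hF₀X (hFF₀ hz), (mem_vert_iff.1 ⟨hz, fun hzF => ?_⟩).2⟩
    have hdiff : newton (F \ {z}) = newton X := (newton_sdiff_singleton hzF).trans hFN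
    exact (hFmin ⟨sdiff_subset.trans hFF₀, hdiff⟩ sdiff_subset hz).2 rfl
  exact (newton_mono (vert_subset X)).antisymm (hFN ▸ newton_mono hFvert)

theorem vert_vert_add (X Y : Set (Fin m → ℕ)) : vert (vert X + Y) = vert (X + Y) :=
  vert_eq_of_newton_eq (add_subset_add_right (vert_subset X))
    (by rw [newton_add, newton_add, newton_vert])

end NewtonPolygon

theorem vert_minkowski_props_general (m : ℕ) (X Y : Set (Fin m → ℕ)) :
    vert (vert X + vert Y) = vert (vert X + Y) ∧
    vert (vert X + Y) = vert (X + vert Y) ∧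
    vert (X + vert Y) = vert (X + Y) := by
  have hX : vert (vert X + vert Y) = vert (X + vert Y) := vert_vert_add X (vert Y)
  have hY : vert (X + vert Y) = vert (X + Y) := by
    rw [add_comm X, add_comm X, vert_vert_add]
  have hXY : vert (vert X + Y) = vert (X + Y) := vert_vert_add X Y
  exact ⟨hX.trans (hY.trans hXY.symm), hXY.trans hY.symm, hY⟩

theorem vert_minkowski_props (m : ℕ) (hm : 1 ≤ m) (X Y : Set (Fin m → ℕ)) :
    vert (vert X + vert Y) = vert (vert X + Y) ∧
    vert (vert X + Y) = vert (X + vert Y) ∧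
    vert (X + vert Y) = vert (X + Y) :=
  vert_minkowski_props_general m X Y

end
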